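/- Let (Γ_i)_{i ≥ 0} be any sequence of complex n×n matrices solving the A_{n−1} reduced string equation. For a finitely supported f : ℤ → (Fin n → ℂ) define (γ·f)(k) := ∑_{i ∈ ℕ} Γ_i.mulVec (f(k+i)) (a finite sum), and define operators on arbitrary g : ℤ → (Fin n → ℂ) coefficientwise by (D g)(k) := (k+1)·g(k+1), (P g)(k) := (1/n)·ρ.mulVec (g(k+1)), (Λ g)(k)(0) := g(k−1)(n−1) and (Λ g)(k)(α) := g(k)(α−1) for α ≥ 1. Then for every finitely supported f : ℤ → (Fin n → ℂ) one has D(γ·f) + P(γ·f) − Λ(γ·f) = γ·(Df − Λf); in particular the Kac–Schwarz operator d/dz + ρ/(nz) − Λ maps the space W_γ = γ·(vector Laurent polynomials with nonnegative support) into itself whenever f is supported on ℕ. -/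
import Mathlib


/-- The subdiagonal shift matrix `A` of size `n`: `(A)_{a,b} = 1` iff `a = b + 1`. -/
noncomputable def matA (n : ℕ) : Matrix (Fin n) (Fin n) ℂ :=
  Matrix.of fun a b => if (a : ℕ) = (b : ℕ) + 1 then 1 else 0

/-- The matrix `B` of size `n` whose only nonzero entry is a `1` in the upper-right
corner (position `(1,n)`, zero-indexed `(0, n−1)`). -/
noncomputable def matB (n : ℕ) : Matrix (Fin n) (Fin n) ℂ :=
  Matrix.of fun a b => if (a : ℕ) = 0 ∧ (b : ℕ) = n - 1 then 1 else 0

/-- The diagonal matrix `ρ` with entries `ρ_{α,α} = α − (n−1)/2` (zero-indexed). -/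
noncomputable def matRho (n : ℕ) : Matrix (Fin n) (Fin n) ℂ :=
  Matrix.diagonal fun a => ((a : ℕ) : ℂ) - ((n : ℂ) - 1) / 2

/-- A sequence `(Γ_i)_{i ≥ 0}` of complex `n×n` matrices (with `Γ_{−1} = 0`) solves the
`A_{n−1}` reduced string equation if for all `i ≥ 0`:
`A·Γ_i + B·Γ_{i+1} + (i−1)·Γ_{i−1} − (1/n)·ρ·Γ_{i−1} = Γ_i·A + Γ_{i+1}·B`. -/
def SolvesAredSE (n : ℕ) (Γ : ℕ → Matrix (Fin n) (Fin n) ℂ) : Prop :=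
  ∀ i : ℕ,
    matA n * Γ i + matB n * Γ (i + 1)
      + ((i : ℂ) - 1) • (if i = 0 then 0 else Γ (i - 1))
      - ((n : ℂ))⁻¹ • (matRho n * (if i = 0 then 0 else Γ (i - 1)))
    = Γ i * matA n + Γ (i + 1) * matB n

/-- The action of `γ(z) = ∑_{i ≥ 0} Γ_i z^{−i}` on vector-valued formal series:
`(γ·f)(k) = ∑_{i ∈ ℕ} Γ_i.mulVec (f(k+i))`. -/
noncomputable def gammaMul {n : ℕ} (Γ : ℕ → Matrix (Fin n) (Fin n) ℂ)
    (f : ℤ → Fin n → ℂ) : ℤ → Fin n → ℂ :=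
  fun k => ∑ᶠ i : ℕ, (Γ i).mulVec (f (k + (i : ℤ)))

/-- The coefficientwise form of `d/dz`: `(D g)(k) = (k+1)·g(k+1)`. -/
noncomputable def Dop {n : ℕ} (g : ℤ → Fin n → ℂ) : ℤ → Fin n → ℂ :=
  fun k => ((k : ℂ) + 1) • g (k + 1)

/-- The coefficientwise form of `ρ/(nz)`: `(P g)(k) = (1/n)·ρ.mulVec (g(k+1))`. -/
noncomputable def Pop {n : ℕ} (g : ℤ → Fin n → ℂ) : ℤ → Fin n → ℂ :=
  fun k => ((n : ℂ))⁻¹ • (matRho n).mulVec (g (k + 1))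

/-- The coefficientwise form of multiplication by `Λ(z) = A + zB`:
`(Λ g)(k)(0) = g(k−1)(n−1)` and `(Λ g)(k)(α) = g(k)(α−1)` for `α ≥ 1`. -/
def LamV {n : ℕ} (g : ℤ → Fin n → ℂ) : ℤ → Fin n → ℂ := fun k α =>
  if (α : ℕ) = 0 then g (k - 1) ⟨n - 1, by have := α.isLt; omega⟩
  else g k ⟨(α : ℕ) - 1, by have := α.isLt; omega⟩

section AuxKS
variable {n : ℕ}


lemma matA_mul_apply (X : Matrix (Fin n) (Fin n) ℂ) (a b : Fin n) :
    (matA n * X) a b = if h : 0 < (a : ℕ) then X ⟨(a : ℕ) - 1, by omega⟩ b else 0 := by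
  rw [Matrix.mul_apply]
  split
  · next h =>
    rw [Finset.sum_eq_single (⟨(a : ℕ) - 1, by omega⟩ : Fin n)]
    · simp [matA]; omega
    · intro c _ hc
      have : (a : ℕ) ≠ (c : ℕ) + 1 := by
        intro he; apply hc; apply Fin.ext; simp; omega
      simp [matA, this]
    · simp
  · next h =>
    apply Finset.sum_eq_zero
    intro c _
    have : (a : ℕ) ≠ (c : ℕ) + 1 := by omega
    simp [matA, this]

lemma mul_matA_apply (X : Matrix (Fin n) (Fin n) ℂ) (a b : Fin n) :
    (X * matA n) a b = if h : (b : ℕ) + 1 < n then X a ⟨(b : ℕ) + 1, h⟩ else 0 := by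
  rw [Matrix.mul_apply]
  split
  · next h =>
    rw [Finset.sum_eq_single (⟨(b : ℕ) + 1, h⟩ : Fin n)]
    · simp [matA]
    · intro c _ hc
      have : (c : ℕ) ≠ (b : ℕ) + 1 := by
        intro he; apply hc; apply Fin.ext; simpa using he
      simp [matA, this]
    · simp
  · next h =>
    apply Finset.sum_eq_zero
    intro c _
    have : (c : ℕ) ≠ (b : ℕ) + 1 := by have := c.isLt; omega
    simp [matA, this]

lemma matB_mul_apply (hn : 2 ≤ n) (X : Matrix (Fin n) (Fin n) ℂ) (a b : Fin n) :
    (matB n * X) a b = if (a : ℕ) = 0 then X ⟨n - 1, by omega⟩ b else 0 := by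
  rw [Matrix.mul_apply]
  split
  · next h =>
    rw [Finset.sum_eq_single (⟨n - 1, by omega⟩ : Fin n)]
    · simp [matB, h]
    · intro c _ hc
      have : ¬((a : ℕ) = 0 ∧ (c : ℕ) = n - 1) := by
        rintro ⟨-, h2⟩; apply hc; apply Fin.ext; simpa using h2
      simp [matB, this]
    · simp
  · next h =>
    apply Finset.sum_eq_zero
    intro c _
    simp [matB, h]

lemma mul_matB_apply (hn : 2 ≤ n) (X : Matrix (Fin n) (Fin n) ℂ) (a b : Fin n) :
    (X * matB n) a b = if (b : ℕ) = n - 1 then X a ⟨0, by omega⟩ else 0 := by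
  rw [Matrix.mul_apply]
  split
  · next h =>
    rw [Finset.sum_eq_single (⟨0, by omega⟩ : Fin n)]
    · simp [matB, h]
    · intro c _ hc
      have : ¬((c : ℕ) = 0 ∧ (b : ℕ) = n - 1) := by
        rintro ⟨h2, -⟩; apply hc; apply Fin.ext; simpa using h2
      simp [matB, this]
    · simp
  · next h =>
    apply Finset.sum_eq_zero
    intro c _
    simp [matB, h]

lemma matRho_mul_apply (X : Matrix (Fin n) (Fin n) ℂ) (a b : Fin n) :
    (matRho n * X) a b = (((a : ℕ) : ℂ) - ((n : ℂ) - 1) / 2) * X a b := by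
  simp [matRho, Matrix.diagonal_mul]


lemma key (hn : 2 ≤ n) (Γ : ℕ → Matrix (Fin n) (Fin n) ℂ) (hΓ : SolvesAredSE n Γ) :
    matB n * Γ 0 = Γ 0 * matB n := by
  have E0 : matA n * Γ 0 + matB n * Γ 1 = Γ 0 * matA n + Γ 1 * matB n := by
    have := hΓ 0; simpa using this
  have E1 : matA n * Γ 1 + matB n * Γ 2 - ((n : ℂ))⁻¹ • (matRho n * Γ 0)
      = Γ 1 * matA n + Γ 2 * matB n := by
    have h := hΓ 1
    simp only [if_neg (one_ne_zero)] at h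
    norm_num at h
    exact h
  -- Toeplitz step
  have T : ∀ (a b : ℕ) (ha : a + 1 < n) (hb : b + 1 < n),
      Γ 0 ⟨a+1, ha⟩ ⟨b+1, hb⟩ = Γ 0 ⟨a, by omega⟩ ⟨b, by omega⟩ := by
    intro a b ha hb
    have h := congrFun (congrFun E0 ⟨a+1, ha⟩) ⟨b, by omega⟩
    simp only [Matrix.add_apply, matA_mul_apply, mul_matA_apply,
      matB_mul_apply hn, mul_matB_apply hn] at h
    rw [dif_pos (Nat.succ_pos a), dif_pos hb, if_neg (Nat.succ_ne_zero a),
      if_neg (show ¬((b:ℕ) = n-1) by omega)] at h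
    simp only [add_zero, zero_add] at h
    exact h.symm
  -- Toeplitz: entries depend only on the diagonal
  have TC : ∀ (a b a' b' : ℕ) (ha : a < n) (hb : b < n) (ha' : a' < n) (hb' : b' < n),
      a + b' = a' + b → Γ 0 ⟨a, ha⟩ ⟨b, hb⟩ = Γ 0 ⟨a', ha'⟩ ⟨b', hb'⟩ := by
    have TC0 : ∀ (k a b : ℕ) (ha : a + k < n) (hb : b + k < n),
        Γ 0 ⟨a+k, ha⟩ ⟨b+k, hb⟩ = Γ 0 ⟨a, by omega⟩ ⟨b, by omega⟩ := by
      intro k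
      induction k with
      | zero => intro a b ha hb; rfl
      | succ k ih =>
        intro a b ha hb
        exact (T (a+k) (b+k) ha hb).trans (ih a b (by omega) (by omega))
    intro a b a' b' ha hb ha' hb' hdiag
    rcases le_total a a' with hle | hle
    · obtain ⟨k, hk⟩ : ∃ k, a' = a + k := ⟨a' - a, by omega⟩
      have hk' : b' = b + k := by omega
      subst hk; subst hk'
      exact (TC0 k a b ha' hb').symm
    · obtain ⟨k, hk⟩ : ∃ k, a = a' + k := ⟨a - a', by omega⟩
      have hk' : b = b' + k := by omega
      subst hk; subst hk'
      exact TC0 k a' b' ha hb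
  -- boundary relations from E0
  have R1 : ∀ (a : ℕ) (h0 : 0 < a) (ha : a < n),
      Γ 1 ⟨a, ha⟩ ⟨0, by omega⟩ = Γ 0 ⟨a-1, by omega⟩ ⟨n-1, by omega⟩ := by
    intro a h0 ha
    have h := congrFun (congrFun E0 ⟨a, ha⟩) ⟨n-1, by omega⟩
    simp only [Matrix.add_apply, matA_mul_apply, mul_matA_apply,
      matB_mul_apply hn, mul_matB_apply hn] at h
    rw [dif_pos h0, dif_neg (show ¬(n-1+1 < n) by omega), if_neg (show ¬(a = 0) by omega)] at h
    simp only [if_true, add_zero, zero_add] at h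
    exact h.symm
  have R2 : ∀ (b : ℕ) (hb : b + 1 < n),
      Γ 1 ⟨n-1, by omega⟩ ⟨b, by omega⟩ = Γ 0 ⟨0, by omega⟩ ⟨b+1, hb⟩ := by
    intro b hb
    have h := congrFun (congrFun E0 ⟨0, by omega⟩) ⟨b, by omega⟩
    simp only [Matrix.add_apply, matA_mul_apply, mul_matA_apply,
      matB_mul_apply hn, mul_matB_apply hn] at h
    rw [dif_neg (show ¬(0 < 0) by omega), dif_pos hb,
      if_neg (show ¬((b:ℕ) = n-1) by omega)] at h
    simp only [if_true, add_zero, zero_add] at h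
    exact h
  have R3 : Γ 1 ⟨n-1, by omega⟩ ⟨n-1, by omega⟩ = Γ 1 ⟨0, by omega⟩ ⟨0, by omega⟩ := by
    have h := congrFun (congrFun E0 ⟨0, by omega⟩) ⟨n-1, by omega⟩
    simp only [Matrix.add_apply, matA_mul_apply, mul_matA_apply,
      matB_mul_apply hn, mul_matB_apply hn] at h
    rw [dif_neg (show ¬(0 < 0) by omega), dif_neg (show ¬(n-1+1 < n) by omega)] at h
    simp only [if_true, add_zero, zero_add] at h
    exact h
  -- interior relation from E1
  have I1 : ∀ (a b : ℕ) (h0 : 0 < a) (ha : a < n) (hb : b + 1 < n),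
      Γ 1 ⟨a-1, by omega⟩ ⟨b, by omega⟩
        - ((n : ℂ))⁻¹ * (((a : ℕ) : ℂ) - ((n : ℂ) - 1) / 2) * Γ 0 ⟨a, ha⟩ ⟨b, by omega⟩
      = Γ 1 ⟨a, ha⟩ ⟨b+1, hb⟩ := by
    intro a b h0 ha hb
    have h := congrFun (congrFun E1 ⟨a, ha⟩) ⟨b, by omega⟩
    simp only [Matrix.sub_apply, Matrix.add_apply, Matrix.smul_apply, matA_mul_apply,
      mul_matA_apply, matB_mul_apply hn, mul_matB_apply hn, matRho_mul_apply,
      smul_eq_mul] at h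
    rw [dif_pos h0, dif_pos hb, if_neg (show ¬((a:ℕ) = 0) by omega),
      if_neg (show ¬((b:ℕ) = n-1) by omega)] at h
    simp only [add_zero, zero_add] at h
    rw [← h]; ring
  -- helper congruence
  have ent_congr : ∀ (X : Matrix (Fin n) (Fin n) ℂ) {a b a' b' : ℕ}
      (ha : a < n) (hb : b < n) (ha' : a' < n) (hb' : b' < n),
      a = a' → b = b' → X ⟨a, ha⟩ ⟨b, hb⟩ = X ⟨a', ha'⟩ ⟨b', hb'⟩ := by
    intro X a b a' b' ha hb ha' hb' h1 h2
    subst h1; subst h2; rfl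
  -- vanishing of the strictly lower Toeplitz coefficients
  have Z : ∀ (d : ℕ) (h1 : 1 ≤ d) (hd : d < n), Γ 0 ⟨d, hd⟩ ⟨0, by omega⟩ = 0 := by
    intro d h1 hd
    set N := n - d with hNdef
    have hNpos : 0 < N := by omega
    let F : ℕ → ℂ := fun a => if h : a + d ≤ n then Γ 1 ⟨a + d - 1, by omega⟩ ⟨a, by omega⟩ else 0
    have hF : ∀ (a : ℕ) (h : a + d ≤ n), F a = Γ 1 ⟨a + d - 1, by omega⟩ ⟨a, by omega⟩ :=
      fun a h => dif_pos h
    have tel : ∑ a ∈ Finset.range N, (F a - F (a+1)) = F 0 - F N := Finset.sum_range_sub' F N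
    have step : ∀ a ∈ Finset.range N, F a - F (a+1)
        = (((a + d : ℕ) : ℂ) - ((n : ℂ) - 1) / 2) * (((n : ℂ))⁻¹ * Γ 0 ⟨d, hd⟩ ⟨0, by omega⟩) := by
      intro a ha
      rw [Finset.mem_range] at ha
      have hFa : F a = Γ 1 ⟨a + d - 1, by omega⟩ ⟨a, by omega⟩ := hF a (by omega)
      have hFa1 : F (a+1) = Γ 1 ⟨a + d, by omega⟩ ⟨a + 1, by omega⟩ :=
        (hF (a+1) (by omega)).trans (ent_congr _ _ _ _ _ (by omega) rfl)
      rw [hFa, hFa1]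
      have hI := I1 (a+d) a (by omega) (by omega) (by omega)
      rw [TC (a+d) a d 0 (by omega) (by omega) hd (by omega) (by omega)] at hI
      linear_combination hI
    have main : (∑ a ∈ Finset.range N, (((a + d : ℕ) : ℂ) - ((n : ℂ) - 1) / 2))
        * (((n : ℂ))⁻¹ * Γ 0 ⟨d, hd⟩ ⟨0, by omega⟩) = F 0 - F N := by
      rw [← tel, Finset.sum_mul]
      exact Finset.sum_congr rfl (fun a ha => (step a ha).symm)
    have hNc : (N : ℂ) = (n : ℂ) - (d : ℂ) := by rw [hNdef]; exact Nat.cast_sub hd.le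
    have g1 : (∑ i ∈ Finset.range N, (i : ℂ)) * 2 = (N : ℂ) * ((N : ℂ) - 1) := by
      have h := Finset.sum_range_id_mul_two N
      have h2 : (((∑ i ∈ Finset.range N, i) * 2 : ℕ) : ℂ) = ((N * (N - 1) : ℕ) : ℂ) := by
        exact_mod_cast congrArg (fun t : ℕ => (t : ℂ)) h
      push_cast [Nat.cast_sub (show 1 ≤ N by omega)] at h2
      exact h2
    have scal : (∑ a ∈ Finset.range N, (((a + d : ℕ) : ℂ) - ((n : ℂ) - 1) / 2))
        = (d : ℂ) * ((n : ℂ) - (d : ℂ)) / 2 := by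
      have e : ∀ a ∈ Finset.range N, (((a + d : ℕ) : ℂ) - ((n : ℂ) - 1) / 2)
          = (a : ℂ) + ((d : ℂ) - ((n : ℂ) - 1) / 2) := by
        intro a _; push_cast; ring
      rw [Finset.sum_congr rfl e, Finset.sum_add_distrib, Finset.sum_const, Finset.card_range,
        nsmul_eq_mul, hNc]
      rw [hNc] at g1
      linear_combination g1 / 2
    have ends : F 0 - F N = 0 := by
      have hF0 : F 0 = Γ 1 ⟨d - 1, by omega⟩ ⟨0, by omega⟩ :=
        (hF 0 (by omega)).trans (ent_congr _ _ _ _ _ (by omega) rfl)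
      have hFN : F N = Γ 1 ⟨n - 1, by omega⟩ ⟨n - d, by omega⟩ :=
        (hF N (by omega)).trans (ent_congr _ _ _ _ _ (by omega) (by omega))
      rw [hF0, hFN]
      rcases eq_or_lt_of_le h1 with hd1 | hd2
      · have e0 : Γ 1 ⟨d - 1, by omega⟩ ⟨0, by omega⟩ = Γ 1 ⟨0, by omega⟩ ⟨0, by omega⟩ :=
          ent_congr _ _ _ _ _ (by omega) rfl
        have eN : Γ 1 ⟨n - 1, by omega⟩ ⟨n - d, by omega⟩
            = Γ 1 ⟨n - 1, by omega⟩ ⟨n - 1, by omega⟩ :=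
          ent_congr _ _ _ _ _ rfl (by omega)
        rw [e0, eN, R3, sub_self]
      · have hR1 := R1 (d-1) (by omega) (by omega)
        have hR2 := R2 (n-d) (by omega)
        rw [hR1, hR2]
        rw [TC (d-1-1) (n-1) 0 (n-d+1) (by omega) (by omega) (by omega) (by omega) (by omega),
          sub_self]
    rw [scal, ends] at main
    have main2 : ((d : ℂ) * ((n : ℂ) - (d : ℂ)) / 2 * ((n : ℂ))⁻¹) * Γ 0 ⟨d, hd⟩ ⟨0, by omega⟩
        = 0 := by linear_combination main
    have hne : ((d : ℂ) * ((n : ℂ) - (d : ℂ)) / 2 * ((n : ℂ))⁻¹) ≠ 0 := by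
      have hd0 : (d : ℂ) ≠ 0 := Nat.cast_ne_zero.2 (by omega)
      have hnd : (n : ℂ) - (d : ℂ) ≠ 0 := by
        have h9 : ((n - d : ℕ) : ℂ) ≠ 0 := Nat.cast_ne_zero.2 (by omega)
        rwa [Nat.cast_sub hd.le] at h9
      have hn0 : ((n : ℂ))⁻¹ ≠ 0 := inv_ne_zero (Nat.cast_ne_zero.2 (by omega))
      exact mul_ne_zero (div_ne_zero (mul_ne_zero hd0 hnd) two_ne_zero) hn0
    exact (mul_eq_zero.mp main2).resolve_left hne
  -- assemble
  ext a b
  rw [matB_mul_apply hn, mul_matB_apply hn]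
  by_cases ha : (a : ℕ) = 0
  · by_cases hb : (b : ℕ) = n - 1
    · rw [if_pos ha, if_pos hb]
      have ea : a = ⟨0, by omega⟩ := Fin.ext ha
      have eb : b = ⟨n-1, by omega⟩ := Fin.ext hb
      rw [ea, eb]
      exact TC (n-1) (n-1) 0 0 (by omega) (by omega) (by omega) (by omega) (by omega)
    · rw [if_pos ha, if_neg hb]
      have h1 := TC (n-1) (b : ℕ) (n-1-(b : ℕ)) 0 (by omega) b.isLt (by omega) (by omega) (by omega)
      exact h1.trans (Z (n-1-(b : ℕ)) (by omega) (by omega))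
  · by_cases hb : (b : ℕ) = n - 1
    · rw [if_neg ha, if_pos hb]
      exact (Z (a : ℕ) (by omega) a.isLt).symm
    · rw [if_neg ha, if_neg hb]


variable {n : ℕ}

lemma matA_mulVec (v : Fin n → ℂ) (a : Fin n) :
    (matA n).mulVec v a = if h : 0 < (a : ℕ) then v ⟨(a : ℕ) - 1, by omega⟩ else 0 := by
  rw [Matrix.mulVec]
  show (∑ c, matA n a c * v c) = _
  split
  · next h =>
    rw [Finset.sum_eq_single (⟨(a : ℕ) - 1, by omega⟩ : Fin n)]
    · simp [matA]; omega
    · intro c _ hc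
      have : (a : ℕ) ≠ (c : ℕ) + 1 := by
        intro he; apply hc; apply Fin.ext; simp; omega
      simp [matA, this]
    · simp
  · next h =>
    apply Finset.sum_eq_zero
    intro c _
    have : (a : ℕ) ≠ (c : ℕ) + 1 := by omega
    simp [matA, this]

lemma matB_mulVec (hn : 2 ≤ n) (v : Fin n → ℂ) (a : Fin n) :
    (matB n).mulVec v a = if (a : ℕ) = 0 then v ⟨n - 1, by omega⟩ else 0 := by
  rw [Matrix.mulVec]
  show (∑ c, matB n a c * v c) = _
  split
  · next h =>
    rw [Finset.sum_eq_single (⟨n - 1, by omega⟩ : Fin n)]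
    · simp [matB, h]
    · intro c _ hc
      have : ¬((a : ℕ) = 0 ∧ (c : ℕ) = n - 1) := by
        rintro ⟨-, h2⟩; apply hc; apply Fin.ext; simpa using h2
      simp [matB, this]
    · simp
  · next h =>
    apply Finset.sum_eq_zero
    intro c _
    simp [matB, h]

lemma lamV_eq (hn : 2 ≤ n) (g : ℤ → Fin n → ℂ) (k : ℤ) :
    LamV g k = (matA n).mulVec (g k) + (matB n).mulVec (g (k - 1)) := by
  funext a
  rw [Pi.add_apply, matA_mulVec, matB_mulVec hn]
  by_cases h : (a : ℕ) = 0
  · simp [LamV, h]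
  · simp [LamV, h, Nat.pos_of_ne_zero h]

/-- point mass -/
def delta {n : ℕ} (m : ℤ) (v : Fin n → ℂ) : ℤ → Fin n → ℂ := fun k => if k = m then v else 0

lemma delta_supp (m : ℤ) (v : Fin n → ℂ) : (Function.support (delta m v)).Finite := by
  apply Set.Finite.subset (Set.finite_singleton m)
  intro k hk
  rw [Function.mem_support] at hk
  by_contra h
  simp only [Set.mem_singleton_iff] at h
  exact hk (if_neg h)

lemma gm_supp (Γ : ℕ → Matrix (Fin n) (Fin n) ℂ) (f : ℤ → Fin n → ℂ)
    (hf : (Function.support f).Finite) (k : ℤ) :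
    (Function.support fun i : ℕ => (Γ i).mulVec (f (k + (i : ℤ)))).Finite := by
  have h1 : ((fun i : ℕ => k + (i : ℤ)) ⁻¹' (Function.support f)).Finite :=
    Set.Finite.preimage (Set.injOn_of_injective (fun i j h => by omega)) hf
  apply h1.subset
  intro i hi
  rw [Function.mem_support] at hi
  simp only [Set.mem_preimage, Function.mem_support]
  intro h0
  exact hi (by rw [h0, Matrix.mulVec_zero])

lemma gammaMul_add (Γ : ℕ → Matrix (Fin n) (Fin n) ℂ) (f g : ℤ → Fin n → ℂ)
    (hf : (Function.support f).Finite) (hg : (Function.support g).Finite) :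
    gammaMul Γ (f + g) = gammaMul Γ f + gammaMul Γ g := by
  funext k
  show (∑ᶠ i : ℕ, (Γ i).mulVec ((f + g) (k + (i : ℤ))))
      = (∑ᶠ i : ℕ, (Γ i).mulVec (f (k + (i : ℤ)))) + ∑ᶠ i : ℕ, (Γ i).mulVec (g (k + (i : ℤ)))
  rw [← finsum_add_distrib (gm_supp Γ f hf k) (gm_supp Γ g hg k)]
  exact finsum_congr fun i => by rw [Pi.add_apply, Matrix.mulVec_add]

lemma gammaMul_neg (Γ : ℕ → Matrix (Fin n) (Fin n) ℂ) (f : ℤ → Fin n → ℂ) :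
    gammaMul Γ (-f) = -gammaMul Γ f := by
  funext k
  show (∑ᶠ i : ℕ, (Γ i).mulVec ((-f) (k + (i : ℤ)))) = -∑ᶠ i : ℕ, (Γ i).mulVec (f (k + (i : ℤ)))
  rw [← finsum_neg_distrib]
  exact finsum_congr fun i => by rw [Pi.neg_apply, Matrix.mulVec_neg]

lemma gammaMul_sub (Γ : ℕ → Matrix (Fin n) (Fin n) ℂ) (f g : ℤ → Fin n → ℂ)
    (hf : (Function.support f).Finite) (hg : (Function.support g).Finite) :
    gammaMul Γ (f - g) = gammaMul Γ f - gammaMul Γ g := by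
  rw [sub_eq_add_neg, sub_eq_add_neg, gammaMul_add Γ f (-g) hf (by simpa using hg),
    gammaMul_neg]

lemma gammaMul_delta (Γ : ℕ → Matrix (Fin n) (Fin n) ℂ) (m : ℤ) (v : Fin n → ℂ) (k : ℤ) :
    gammaMul Γ (delta m v) k = if k ≤ m then (Γ (m - k).toNat).mulVec v else 0 := by
  show (∑ᶠ i : ℕ, (Γ i).mulVec (if k + (i : ℤ) = m then v else 0)) = _
  by_cases h : k ≤ m
  · rw [if_pos h]
    rw [finsum_eq_single _ (m - k).toNat]
    · rw [if_pos (by omega)]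
    · intro x hx
      rw [if_neg (by omega), Matrix.mulVec_zero]
  · rw [if_neg h]
    rw [finsum_congr (fun i : ℕ => by
      rw [if_neg (by omega : ¬(k + (i : ℤ) = m)), Matrix.mulVec_zero]), finsum_zero]

lemma Dop_add (f g : ℤ → Fin n → ℂ) : Dop (f + g) = Dop f + Dop g := by
  funext k
  show ((k : ℂ) + 1) • (f + g) (k + 1) = _
  rw [Pi.add_apply, smul_add]
  rfl

lemma Pop_add (f g : ℤ → Fin n → ℂ) : Pop (f + g) = Pop f + Pop g := by
  funext k
  show ((n : ℂ))⁻¹ • (matRho n).mulVec ((f + g) (k + 1)) = _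
  rw [Pi.add_apply, Matrix.mulVec_add, smul_add]
  rfl

lemma LamV_add (f g : ℤ → Fin n → ℂ) : LamV (f + g) = LamV f + LamV g := by
  funext k a
  by_cases h : (a : ℕ) = 0 <;> simp [LamV, h]

lemma opsupp (g : ℤ → Fin n → ℂ) (hg : (Function.support g).Finite) :
    (Function.support (Dop g - LamV g)).Finite := by
  apply Set.Finite.subset (((hg.image (fun k => k - 1)).union hg).union (hg.image (· + 1)))
  intro k hk
  rw [Function.mem_support] at hk
  by_contra hmem
  simp only [Set.mem_union, Set.mem_image, Function.mem_support, not_or, not_exists,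
    not_and] at hmem
  obtain ⟨⟨h1, h2⟩, h3⟩ := hmem
  have hg1 : g (k + 1) = 0 := by
    by_contra hne
    exact h1 (k + 1) hne (by omega)
  have hg2 : g k = 0 := by by_contra hne; exact h2 hne
  have hg3 : g (k - 1) = 0 := by
    by_contra hne
    exact h3 (k - 1) hne (by omega)
  apply hk
  rw [Pi.sub_apply]
  have hD : Dop g k = 0 := by show ((k:ℂ)+1) • g (k+1) = 0; rw [hg1, smul_zero]
  have hL : LamV g k = 0 := by
    funext a
    show (if (a : ℕ) = 0 then _ else _) = 0
    split
    · rw [hg3]; rfl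
    · rw [hg2]; rfl
  rw [hD, hL, sub_zero]

lemma point (hn : 2 ≤ n) (Γ : ℕ → Matrix (Fin n) (Fin n) ℂ) (hΓ : SolvesAredSE n Γ)
    (keyC : matB n * Γ 0 = Γ 0 * matB n) (m : ℤ) (v : Fin n → ℂ) :
    Dop (gammaMul Γ (delta m v)) + Pop (gammaMul Γ (delta m v)) - LamV (gammaMul Γ (delta m v))
      = gammaMul Γ (Dop (delta m v) - LamV (delta m v)) := by
  have E0 : matA n * Γ 0 + matB n * Γ 1 = Γ 0 * matA n + Γ 1 * matB n := by
    have := hΓ 0; simpa using this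
  have hD : Dop (delta m v) = delta (m - 1) ((m : ℂ) • v) := by
    funext k
    show ((k : ℂ) + 1) • (if k + 1 = m then v else 0) = if k = m - 1 then (m : ℂ) • v else 0
    by_cases h : k = m - 1
    · rw [if_pos (by omega), if_pos h]
      have hc : (k : ℂ) + 1 = (m : ℂ) := by
        have hk : k + 1 = m := by omega
        calc (k : ℂ) + 1 = ((k + 1 : ℤ) : ℂ) := by push_cast; ring
        _ = (m : ℂ) := by rw [hk]
      rw [hc]
    · rw [if_neg (by omega), if_neg h, smul_zero]
  have hL : LamV (delta m v) = delta m ((matA n).mulVec v) + delta (m+1) ((matB n).mulVec v) := by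
    funext k
    rw [lamV_eq hn]
    show (matA n).mulVec (if k = m then v else 0) + (matB n).mulVec (if k - 1 = m then v else 0)
        = (if k = m then (matA n).mulVec v else 0) + (if k = m + 1 then (matB n).mulVec v else 0)
    congr 1
    · by_cases h : k = m
      · rw [if_pos h, if_pos h]
      · rw [if_neg h, if_neg h, Matrix.mulVec_zero]
    · by_cases h : k = m + 1
      · rw [if_pos (by omega), if_pos h]
      · rw [if_neg (by omega), if_neg h, Matrix.mulVec_zero]
  have hsplit : Dop (delta m v) - LamV (delta m v)
      = delta (m-1) ((m:ℂ) • v) - delta m ((matA n).mulVec v) - delta (m+1) ((matB n).mulVec v) := by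
    rw [hD, hL, sub_add_eq_sub_sub]
  have hfin12 : (Function.support
      (delta (m-1) ((m:ℂ) • v) - delta m ((matA n).mulVec v))).Finite :=
    Set.Finite.subset ((delta_supp (m-1) ((m:ℂ) • v)).union (delta_supp m ((matA n).mulVec v)))
      (Function.support_sub _ _)
  rw [hsplit, gammaMul_sub Γ _ _ hfin12 (delta_supp _ _),
    gammaMul_sub Γ _ _ (delta_supp _ _) (delta_supp _ _)]
  funext k
  simp only [Pi.sub_apply, Pi.add_apply, Dop, Pop]
  rw [lamV_eq hn]
  simp only [gammaMul_delta]
  by_cases h1 : m + 1 < k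
  · rw [if_neg (by omega : ¬(k+1 ≤ m)), if_neg (by omega : ¬(k ≤ m)),
      if_neg (by omega : ¬(k-1 ≤ m)), if_neg (by omega : ¬(k ≤ m-1)),
      if_neg (by omega : ¬(k ≤ m)), if_neg (by omega : ¬(k ≤ m+1))]
    simp [Matrix.mulVec_zero]
  by_cases h2 : k = m + 1
  · rw [if_neg (by omega : ¬(k+1 ≤ m)), if_neg (by omega : ¬(k ≤ m)),
      if_pos (by omega : k-1 ≤ m), if_neg (by omega : ¬(k ≤ m-1)),
      if_neg (by omega : ¬(k ≤ m)), if_pos (by omega : k ≤ m+1)]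
    rw [show (m - (k-1)).toNat = 0 by omega, show (m + 1 - k).toNat = 0 by omega]
    rw [Matrix.mulVec_mulVec, Matrix.mulVec_mulVec, keyC]
    simp [Matrix.mulVec_zero]
  by_cases h3 : k = m
  · rw [if_neg (by omega : ¬(k+1 ≤ m)), if_pos (by omega : k ≤ m),
      if_pos (by omega : k-1 ≤ m), if_neg (by omega : ¬(k ≤ m-1)),
      if_pos (by omega : k ≤ m), if_pos (by omega : k ≤ m+1)]
    rw [show (m - (k-1)).toNat = 1 by omega, show (m - k).toNat = 0 by omega,
      show (m + 1 - k).toNat = 1 by omega]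
    have h0 := congrArg (fun M => Matrix.mulVec M v) E0
    simp only [Matrix.add_mulVec, ← Matrix.mulVec_mulVec] at h0
    simp only [Matrix.mulVec_zero, smul_zero, zero_add, zero_sub]
    rw [h0]
    abel
  · -- k ≤ m - 1
    have hk : k ≤ m - 1 := by omega
    obtain ⟨j, hj⟩ : ∃ j : ℕ, (m - k).toNat = j + 1 := ⟨(m - k).toNat - 1, by omega⟩
    rw [if_pos (by omega : k+1 ≤ m), if_pos (by omega : k ≤ m), if_pos (by omega : k-1 ≤ m),
      if_pos (by omega : k ≤ m-1), if_pos (by omega : k ≤ m), if_pos (by omega : k ≤ m+1)]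
    rw [show (m - (k+1)).toNat = j by omega, hj, show (m - (k-1)).toNat = j + 2 by omega,
      show (m - 1 - k).toNat = j by omega, show (m + 1 - k).toNat = j + 2 by omega]
    rw [Matrix.mulVec_smul]
    have hE := hΓ (j+1)
    rw [if_neg (Nat.succ_ne_zero j)] at hE
    simp only [Nat.add_sub_cancel] at hE
    have h0 := congrArg (fun M => Matrix.mulVec M v) hE
    simp only [Matrix.add_mulVec, Matrix.sub_mulVec, Matrix.smul_mulVec,
      ← Matrix.mulVec_mulVec] at h0
    funext α
    have h0α := congrFun h0 α
    have hmk : (m : ℂ) = (k : ℂ) + (j : ℂ) + 1 := by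
      have hmz : m = k + (j : ℤ) + 1 := by omega
      rw [hmz]; push_cast; ring
    simp only [Pi.add_apply, Pi.sub_apply, Pi.smul_apply, smul_eq_mul] at h0α ⊢
    rw [hmk]
    push_cast at h0α ⊢
    linear_combination -h0α

lemma gammaMul_zero (Γ : ℕ → Matrix (Fin n) (Fin n) ℂ) :
    gammaMul Γ (0 : ℤ → Fin n → ℂ) = 0 := by
  funext k
  show (∑ᶠ i : ℕ, (Γ i).mulVec ((0 : ℤ → Fin n → ℂ) (k + (i : ℤ)))) = 0
  rw [finsum_congr (fun i : ℕ => by rw [Pi.zero_apply, Matrix.mulVec_zero]), finsum_zero]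

theorem stmt_14x (hn : 2 ≤ n) (Γ : ℕ → Matrix (Fin n) (Fin n) ℂ)
    (hΓ : SolvesAredSE n Γ) (keyC : matB n * Γ 0 = Γ 0 * matB n)
    (f : ℤ → Fin n → ℂ) (hf : (Function.support f).Finite) :
    Dop (gammaMul Γ f) + Pop (gammaMul Γ f) - LamV (gammaMul Γ f)
      = gammaMul Γ (Dop f - LamV f) := by
  have main : ∀ (s : Finset ℤ) (f : ℤ → Fin n → ℂ), Function.support f ⊆ (s : Set ℤ) →
      Dop (gammaMul Γ f) + Pop (gammaMul Γ f) - LamV (gammaMul Γ f)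
        = gammaMul Γ (Dop f - LamV f) := by
    intro s
    induction s using Finset.induction_on with
    | empty =>
      intro f hsupp
      have hf0 : f = 0 := Function.support_eq_empty_iff.mp (by simpa using hsupp)
      subst hf0
      have D0 : Dop (0 : ℤ → Fin n → ℂ) = 0 := by
        funext k
        show ((k : ℂ) + 1) • (0 : ℤ → Fin n → ℂ) (k + 1) = _
        simp
      have P0 : Pop (0 : ℤ → Fin n → ℂ) = 0 := by
        funext k
        show ((n : ℂ))⁻¹ • (matRho n).mulVec ((0 : ℤ → Fin n → ℂ) (k + 1)) = _
        simp [Matrix.mulVec_zero]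
      have L0 : LamV (0 : ℤ → Fin n → ℂ) = 0 := by
        funext k a
        show (if (a : ℕ) = 0 then _ else _) = 0
        split <;> rfl
      rw [gammaMul_zero, D0, P0, L0, sub_zero, add_zero, sub_zero, gammaMul_zero]
    | @insert m t hmt ih =>
      intro f hsupp
      set f1 : ℤ → Fin n → ℂ := delta m (f m) with hf1
      set f2 : ℤ → Fin n → ℂ := fun k => if k = m then 0 else f k with hf2
      have hsplit : f = f1 + f2 := by
        funext k
        rw [Pi.add_apply]
        by_cases h : k = m
        · subst h; show f k = (if k = k then f k else 0) + (if k = k then 0 else f k)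
          rw [if_pos rfl, if_pos rfl, add_zero]
        · show f k = (if k = m then f m else 0) + (if k = m then 0 else f k)
          rw [if_neg h, if_neg h, zero_add]
      have hs2 : Function.support f2 ⊆ (t : Set ℤ) := by
        intro k hk
        rw [Function.mem_support] at hk
        by_cases h : k = m
        · exfalso; apply hk; show (if k = m then 0 else f k) = 0; rw [if_pos h]
        · have hfk : f k ≠ 0 := by
            intro h0; apply hk; show (if k = m then 0 else f k) = 0; rw [if_neg h, h0]
          have := hsupp hfk
          simp only [Finset.coe_insert, Set.mem_insert_iff] at this
          rcases this with h' | h'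
          · exact absurd h' h
          · exact h'
      have hfin1 : (Function.support f1).Finite := delta_supp m (f m)
      have hfin2 : (Function.support f2).Finite :=
        Set.Finite.subset t.finite_toSet hs2
      have hDL1 : (Function.support (Dop f1 - LamV f1)).Finite := opsupp f1 hfin1
      have hDL2 : (Function.support (Dop f2 - LamV f2)).Finite := opsupp f2 hfin2
      have hADD : Dop (f1 + f2) - LamV (f1 + f2) = (Dop f1 - LamV f1) + (Dop f2 - LamV f2) := by
        rw [Dop_add, LamV_add]; abel
      rw [hsplit, gammaMul_add Γ f1 f2 hfin1 hfin2, hADD, gammaMul_add Γ _ _ hDL1 hDL2,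
        Dop_add, Pop_add, LamV_add]
      have e1 := point hn Γ hΓ keyC m (f m)
      rw [← hf1] at e1
      have e2 := ih f2 hs2
      rw [← e1, ← e2]
      abel
  exact main hf.toFinset f (by
    intro k hk
    simpa using hf.mem_toFinset.mpr hk)

end AuxKS

/-- if `(Γ_i)` solves the `A_{n−1}` reduced string equation, then for
every finitely supported `f : ℤ → (Fin n → ℂ)` one has
`D(γ·f) + P(γ·f) − Λ(γ·f) = γ·(Df − Λf)`, i.e. the Kac–Schwarz operator
`d/dz + ρ/(nz) − Λ` is intertwined by `γ`. -/
theorem stmt_14 (n : ℕ) (hn : 2 ≤ n) (Γ : ℕ → Matrix (Fin n) (Fin n) ℂ)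
    (hΓ : SolvesAredSE n Γ)
    (f : ℤ → Fin n → ℂ) (hf : (Function.support f).Finite) :
    Dop (gammaMul Γ f) + Pop (gammaMul Γ f) - LamV (gammaMul Γ f)
      = gammaMul Γ (Dop f - LamV f) :=
  stmt_14x hn Γ hΓ (key hn Γ hΓ) f hf
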